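/- arXiv:1502.06814 — 3 statements merged into one kernel-verified Lean document; each statement's English description precedes it below -/
import Mathlib

section
/- For any two orthonormal vectors ψ₁, ψ₂ in a complex inner product space and any three Hermitian operators H₁, H₂, H₃, the determinant of the 3×3 complex matrix M whose i-th row is (⟨ψ₁, Hᵢψ₂⟩, conj⟨ψ₁, Hᵢψ₂⟩, ⟨ψ₂, Hᵢψ₂⟩ − ⟨ψ₁, Hᵢψ₁⟩) is purely imaginary, i.e. its real part is zero. -/
open scoped InnerProductSpace ComplexConjugate

/-- For orthonormal vectors `ψ₁, ψ₂` in a complex inner product space and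
Hermitian operators `H 0, H 1, H 2`, the determinant of the conicity matrix is purely
imaginary. -/
theorem conicity_det_purely_imaginary
    {E : Type*} [NormedAddCommGroup E] [InnerProductSpace ℂ E]
    (H : Fin 3 → (E →ₗ[ℂ] E))
    (hH : ∀ i, ∀ x y : E, ⟪H i x, y⟫_ℂ = ⟪x, H i y⟫_ℂ)
    (ψ₁ ψ₂ : E)
    (h₁ : ⟪ψ₁, ψ₁⟫_ℂ = 1) (h₂ : ⟪ψ₂, ψ₂⟫_ℂ = 1) (h₁₂ : ⟪ψ₁, ψ₂⟫_ℂ = 0)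
    (M : Matrix (Fin 3) (Fin 3) ℂ)
    (hM : M = Matrix.of fun i =>
      ![⟪ψ₁, H i ψ₂⟫_ℂ, conj ⟪ψ₁, H i ψ₂⟫_ℂ, ⟪ψ₂, H i ψ₂⟫_ℂ - ⟪ψ₁, H i ψ₁⟫_ℂ]) :
    (M.det).re = 0 := by
  have hreal : ∀ i (x : E), conj ⟪x, H i x⟫_ℂ = ⟪x, H i x⟫_ℂ := by
    intro i x
    rw [inner_conj_symm, hH]
  have key : conj M.det = -M.det := by
    subst hM
    simp only [Matrix.det_fin_three, Matrix.of_apply, Matrix.cons_val', Matrix.cons_val_zero,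
      Matrix.cons_val_one, Matrix.head_cons, Matrix.empty_val', Matrix.cons_val_fin_one,
      Matrix.head_fin_const, Matrix.cons_val_two, Matrix.tail_cons]
    simp only [map_sub, map_add, map_mul, map_neg, RingHom.id_apply, Complex.conj_conj,
      hreal]
    ring
  have := congrArg Complex.re key
  simp only [Complex.neg_re, Complex.conj_re] at this
  linarith
end

section
/- The determinant of the conicity matrix is invariant under unitary changes of the orthonormal pair: if U ∈ U(2) and (ψ̂₁, ψ̂₂)ᵀ = U(ψ₁, ψ₂)ᵀ for orthonormal ψ₁, ψ₂, then det M(ψ̂₁, ψ̂₂) = det M(ψ₁, ψ₂). -/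
open scoped InnerProductSpace ComplexConjugate

set_option maxHeartbeats 1000000 in
/-- The determinant of the conicity matrix is invariant under unitary changes
of the orthonormal pair. -/
theorem conicity_det_unitary_invariant
    {E : Type*} [NormedAddCommGroup E] [InnerProductSpace ℂ E]
    (H : Fin 3 → (E →ₗ[ℂ] E))
    (hH : ∀ i, ∀ x y : E, ⟪H i x, y⟫_ℂ = ⟪x, H i y⟫_ℂ)
    (M : E → E → Matrix (Fin 3) (Fin 3) ℂ)
    (hM : ∀ φ₁ φ₂ : E, M φ₁ φ₂ = Matrix.of fun i =>
      ![⟪φ₁, H i φ₂⟫_ℂ, conj ⟪φ₁, H i φ₂⟫_ℂ, ⟪φ₂, H i φ₂⟫_ℂ - ⟪φ₁, H i φ₁⟫_ℂ])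
    (ψ₁ ψ₂ : E)
    (h₁ : ⟪ψ₁, ψ₁⟫_ℂ = 1) (h₂ : ⟪ψ₂, ψ₂⟫_ℂ = 1) (h₁₂ : ⟪ψ₁, ψ₂⟫_ℂ = 0)
    (U : Matrix (Fin 2) (Fin 2) ℂ) (hU : U ∈ Matrix.unitaryGroup (Fin 2) ℂ)
    (χ₁ χ₂ : E)
    (hχ₁ : χ₁ = U 0 0 • ψ₁ + U 0 1 • ψ₂)
    (hχ₂ : χ₂ = U 1 0 • ψ₁ + U 1 1 • ψ₂) :
    (M χ₁ χ₂).det = (M ψ₁ ψ₂).det := by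
  have hUU : U * star U = 1 := Matrix.mem_unitaryGroup_iff.mp hU
  have hUU' : star U * U = 1 := Matrix.mem_unitaryGroup_iff'.mp hU
  have er1 : U 0 0 * conj (U 0 0) + U 0 1 * conj (U 0 1) = 1 := by
    simpa [Matrix.mul_apply, Fin.sum_univ_two, Matrix.star_apply, Matrix.one_apply,
      RCLike.star_def] using congrFun (congrFun hUU 0) 0
  have er2 : U 1 0 * conj (U 1 0) + U 1 1 * conj (U 1 1) = 1 := by
    simpa [Matrix.mul_apply, Fin.sum_univ_two, Matrix.star_apply, Matrix.one_apply,
      RCLike.star_def] using congrFun (congrFun hUU 1) 1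
  have er3 : U 0 0 * conj (U 1 0) + U 0 1 * conj (U 1 1) = 0 := by
    simpa [Matrix.mul_apply, Fin.sum_univ_two, Matrix.star_apply, Matrix.one_apply,
      RCLike.star_def] using congrFun (congrFun hUU 0) 1
  have er4 : U 1 0 * conj (U 0 0) + U 1 1 * conj (U 0 1) = 0 := by
    simpa [Matrix.mul_apply, Fin.sum_univ_two, Matrix.star_apply, Matrix.one_apply,
      RCLike.star_def] using congrFun (congrFun hUU 1) 0
  have ec2 : conj (U 0 1) * U 0 1 + conj (U 1 1) * U 1 1 = 1 := by
    simpa [Matrix.mul_apply, Fin.sum_univ_two, Matrix.star_apply, Matrix.one_apply,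
      RCLike.star_def] using congrFun (congrFun hUU' 1) 1
  have hsym : ∀ i, ⟪ψ₂, H i ψ₁⟫_ℂ = conj ⟪ψ₁, H i ψ₂⟫_ℂ := fun i => by
    rw [← hH i ψ₁ ψ₂, inner_conj_symm]
  have hp : ∀ i, conj ⟪ψ₁, H i ψ₁⟫_ℂ = ⟪ψ₁, H i ψ₁⟫_ℂ := fun i => by
    rw [inner_conj_symm, hH]
  have hq : ∀ i, conj ⟪ψ₂, H i ψ₂⟫_ℂ = ⟪ψ₂, H i ψ₂⟫_ℂ := fun i => by
    rw [inner_conj_symm, hH]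
  have key : M χ₁ χ₂ = M ψ₁ ψ₂ *
      !![conj (U 0 0) * U 1 1, U 0 1 * conj (U 1 0), conj (U 1 0) * U 1 1 - conj (U 0 0) * U 0 1;
         conj (U 0 1) * U 1 0, U 0 0 * conj (U 1 1), conj (U 1 1) * U 1 0 - conj (U 0 1) * U 0 0;
         -(conj (U 0 0) * U 1 0), -(U 0 0 * conj (U 1 0)),
           U 0 0 * conj (U 0 0) - U 1 0 * conj (U 1 0)] := by
    subst hχ₁ hχ₂
    ext i j
    rw [hM, hM]
    fin_cases j <;>
      simp [Matrix.mul_apply, Fin.sum_univ_three, map_add, map_smul, inner_add_left,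
        inner_add_right, inner_smul_left, inner_smul_right, map_mul, map_sub, hsym, hp, hq]
    · linear_combination ⟪ψ₂, H i ψ₂⟫_ℂ * er4
    · linear_combination ⟪ψ₂, H i ψ₂⟫_ℂ * er3
    · linear_combination ⟪ψ₂, H i ψ₂⟫_ℂ * er2 - ⟪ψ₂, H i ψ₂⟫_ℂ * er1
  have hdet : Matrix.det
      !![conj (U 0 0) * U 1 1, U 0 1 * conj (U 1 0), conj (U 1 0) * U 1 1 - conj (U 0 0) * U 0 1;
         conj (U 0 1) * U 1 0, U 0 0 * conj (U 1 1), conj (U 1 1) * U 1 0 - conj (U 0 1) * U 0 0;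
         -(conj (U 0 0) * U 1 0), -(U 0 0 * conj (U 1 0)),
           U 0 0 * conj (U 0 0) - U 1 0 * conj (U 1 0)] = 1 := by
    rw [Matrix.det_fin_three]
    simp only [Matrix.cons_val', Matrix.cons_val_zero, Matrix.cons_val_one, Matrix.head_cons,
      Matrix.empty_val', Matrix.cons_val_fin_one, Matrix.head_fin_const, Matrix.of_apply,
      Matrix.cons_val_two, Matrix.tail_cons]
    linear_combination
      (U 0 0 * U 1 1 * conj (U 0 0) * conj (U 1 1)
        - U 0 0 * U 1 1 * conj (U 0 1) * conj (U 1 0)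
        - U 0 1 * U 1 0 * conj (U 0 0) * conj (U 1 1)
        + U 0 1 * U 1 0 * conj (U 0 1) * conj (U 1 0)
        - U 0 1 * U 1 1 * conj (U 0 1) * conj (U 1 1)
        + U 1 0 * U 1 1 * conj (U 1 0) * conj (U 1 1)
        + U 1 1 * conj (U 1 1)) * er1
      + (- U 0 0 * U 1 1 * conj (U 0 1) * conj (U 1 0)
        - U 0 1 ^ 2 * conj (U 0 1) ^ 2
        - U 0 1 * U 1 0 * conj (U 0 0) * conj (U 1 1)
        + U 0 1 * U 1 0 * conj (U 0 1) * conj (U 1 0)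
        - 2 * U 0 1 * U 1 1 * conj (U 0 1) * conj (U 1 1)
        + 2 * U 0 1 * conj (U 0 1)
        + U 1 1 * conj (U 1 1)) * er2
      + (U 0 1 * U 1 1 * conj (U 0 1) ^ 2
        + U 1 1 ^ 2 * conj (U 0 1) * conj (U 1 1)
        - 2 * U 1 1 * conj (U 0 1)) * er3
      + (U 0 1 ^ 2 * conj (U 0 1) * conj (U 1 1)
        + U 0 1 * U 1 1 * conj (U 1 1) ^ 2
        - 2 * U 0 1 * conj (U 1 1)) * er4
      + (- U 0 1 * conj (U 0 1) - U 1 1 * conj (U 1 1) + 1) * ec2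
  rw [key, Matrix.det_mul, hdet, mul_one]
end

section
/- Eigenvalue gap growth along the non-mixing field (finite-dimensional version): let H : ℝ³ → Herm(n) be affine, γ a differentiable curve with γ'(t) = X(φ_j(γ(t)), φ_{j+1}(γ(t))) where φ_j, φ_{j+1} are differentiable orthonormal eigenvector branches for simple eigenvalues λ_j(γ(t)) < λ_{j+1}(γ(t)). Then d/dt[λ_{j+1}(γ(t)) − λ_j(γ(t))] = (1/(2i)) det M(φ_j(γ(t)), φ_{j+1}(γ(t))). -/
open Complex
open scoped InnerProductSpace ComplexConjugate Matrix

/-!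
By Feynman–Hellmann, `λₗ' = ⟨φₗ, (∑ γᵢ' Hᵢ) φₗ⟩` for an eigenvalue branch of a self-adjoint
family, so along `γ' = X` the gap grows at rate `X · d` with
`dᵢ = ⟨φ_{j+1}, Hᵢ φ_{j+1}⟩ − ⟨φ_j, Hᵢ φ_j⟩`. Since `m × m̄ = 2i X`, this is the triple product
`d · (m × m̄) / (2i)` of the columns of `M`, i.e. `det M / (2i)`.
-/

section
variable {𝕜 E : Type*} [RCLike 𝕜] [NormedAddCommGroup E] [InnerProductSpace 𝕜 E]

theorem HasDerivAt.inner_add_inner_eq_zero_of_unit [NormedSpace ℝ E] {φ : ℝ → E} {φ' : E}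
    {t : ℝ} (hφ : HasDerivAt φ φ' t) (hnorm : ∀ s, ⟪φ s, φ s⟫_𝕜 = 1) :
    ⟪φ t, φ'⟫_𝕜 + ⟪φ', φ t⟫_𝕜 = 0 := by
  have h := hφ.inner 𝕜 hφ
  simp only [hnorm] at h
  exact h.unique (hasDerivAt_const t 1)

variable [NormedSpace ℝ E] [IsScalarTower ℝ 𝕜 E]

theorem HasDerivAt.clm_apply_restrictScalars {A : ℝ → E →L[𝕜] E} {A' : E →L[𝕜] E}
    {φ : ℝ → E} {φ' : E} {t : ℝ} (hA : HasDerivAt A A' t) (hφ : HasDerivAt φ φ' t) :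
    HasDerivAt (fun s => A s (φ s)) (A' (φ t) + A t φ') t :=
  ((ContinuousLinearMap.restrictScalarsL 𝕜 E E ℝ ℝ).hasFDerivAt.comp_hasDerivAt t hA).clm_apply hφ

theorem eigenvalue_deriv_eq_inner {A : ℝ → E →L[𝕜] E} {A' : E →L[𝕜] E}
    {φ : ℝ → E} {φ' : E} {lam : ℝ → ℝ} {lam' t : ℝ}
    (hA : HasDerivAt A A' t) (hφ : HasDerivAt φ φ' t) (hlam : HasDerivAt lam lam' t)
    (hsymm : (A t : E →ₗ[𝕜] E).IsSymmetric)
    (heig : ∀ s, A s (φ s) = (lam s : 𝕜) • φ s) (hnorm : ∀ s, ⟪φ s, φ s⟫_𝕜 = 1) :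
    (lam' : 𝕜) = ⟪φ t, A' (φ t)⟫_𝕜 := by
  have hlam_eq : (fun s => ⟪φ s, A s (φ s)⟫_𝕜) = fun s => (lam s : 𝕜) := by
    funext s
    rw [heig, inner_smul_right, hnorm, mul_one]
  have hderiv := hφ.inner 𝕜 (hA.clm_apply_restrictScalars hφ)
  rw [hlam_eq] at hderiv
  have hlam𝕜 : HasDerivAt (fun s => (lam s : 𝕜)) lam' t :=
    (RCLike.ofRealCLM (K := 𝕜)).hasFDerivAt.comp_hasDerivAt t hlam
  have hsymm_term : ⟪φ t, A t φ'⟫_𝕜 = (lam t : 𝕜) * ⟪φ t, φ'⟫_𝕜 := by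
    rw [← ContinuousLinearMap.coe_coe, ← hsymm, ContinuousLinearMap.coe_coe, heig,
      inner_smul_left, RCLike.conj_ofReal]
  have hconj_term : ⟪φ', A t (φ t)⟫_𝕜 = (lam t : 𝕜) * ⟪φ', φ t⟫_𝕜 := by
    rw [heig, inner_smul_right]
  calc (lam' : 𝕜) = ⟪φ t, A' (φ t) + A t φ'⟫_𝕜 + ⟪φ', A t (φ t)⟫_𝕜 := hlam𝕜.unique hderiv
    _ = ⟪φ t, A' (φ t)⟫_𝕜 + (lam t : 𝕜) * (⟪φ t, φ'⟫_𝕜 + ⟪φ', φ t⟫_𝕜) := by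
        rw [inner_add_right, hsymm_term, hconj_term]; ring
    _ = ⟪φ t, A' (φ t)⟫_𝕜 := by
        rw [hφ.inner_add_inner_eq_zero_of_unit hnorm, mul_zero, add_zero]
end

theorem hasDerivAt_add_sum_ofReal_smul {𝕜 F ι : Type*} [RCLike 𝕜] [NormedAddCommGroup F]
    [NormedSpace 𝕜 F] [NormedSpace ℝ F] [IsScalarTower ℝ 𝕜 F] [Fintype ι] (a : F) (v : ι → F)
    {u : ℝ → ι → ℝ} {u' : ι → ℝ} {t : ℝ} (hu : HasDerivAt u u' t) :
    HasDerivAt (fun s => a + ∑ i, (u s i : 𝕜) • v i) (∑ i, (u' i : 𝕜) • v i) t := by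
  have hcoord (i : ι) : HasDerivAt (fun s => (u s i : 𝕜)) (u' i) t :=
    (RCLike.ofRealCLM (K := 𝕜)).hasFDerivAt.comp_hasDerivAt t (hasDerivAt_pi.mp hu i)
  exact (HasDerivAt.fun_sum fun i _ => (hcoord i).smul_const (v i)).const_add a

theorem isSelfAdjoint_add_sum_ofReal_smul {𝕜 A ι : Type*} [RCLike 𝕜] [AddCommMonoid A]
    [StarAddMonoid A] [Module 𝕜 A] [StarModule 𝕜 A] [Fintype ι] {a : A} {v : ι → A}
    (ha : IsSelfAdjoint a) (hv : ∀ i, IsSelfAdjoint (v i)) (u : ι → ℝ) :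
    IsSelfAdjoint (a + ∑ i, (u i : 𝕜) • v i) :=
  ha.add (isSelfAdjoint_sum _ fun i _ =>
    (show IsSelfAdjoint (u i : 𝕜) from RCLike.conj_ofReal _).smul (hv i))

def nonmixingField (a : Fin 3 → ℂ) : Fin 3 → ℝ :=
  ![(a 1 * conj (a 2)).im, (a 2 * conj (a 0)).im, (a 0 * conj (a 1)).im]

theorem cross_star_eq (a : Fin 3 → ℂ) : a ⨯₃ star a = fun i => 2 * I * nonmixingField a i := by
  ext i
  fin_cases i <;> apply Complex.ext <;> simp [cross_apply, nonmixingField] <;> ring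

theorem det_conicity (a d : Fin 3 → ℂ) :
    (Matrix.of fun i => ![a i, conj (a i), d i]).det
      = 2 * I * ∑ i, (nonmixingField a i : ℂ) * d i := by
  have hdet : (Matrix.of fun i => ![a i, conj (a i), d i]).det = Matrix.det ![a, star a, d] := by
    rw [← Matrix.det_transpose]
    congr 1
    ext i j
    fin_cases i <;> rfl
  rw [hdet, ← triple_product_eq_det, triple_product_permutation, triple_product_permutation,
    cross_star_eq]
  rw [dotProduct, Finset.mul_sum]
  exact Finset.sum_congr rfl fun i _ => by ring

theorem gap_derivative_along_nonmixing_field_general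
    {n : ℕ}
    (H₀ : EuclideanSpace ℂ (Fin n) →L[ℂ] EuclideanSpace ℂ (Fin n))
    (Hc : Fin 3 → (EuclideanSpace ℂ (Fin n) →L[ℂ] EuclideanSpace ℂ (Fin n)))
    (hH₀ : IsSelfAdjoint H₀) (hHc : ∀ i, IsSelfAdjoint (Hc i))
    (m : EuclideanSpace ℂ (Fin n) → EuclideanSpace ℂ (Fin n) → Fin 3 → ℂ)
    (Xf : EuclideanSpace ℂ (Fin n) → EuclideanSpace ℂ (Fin n) → Fin 3 → ℝ)
    (hXf : ∀ ψ₁ ψ₂, Xf ψ₁ ψ₂ =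
      ![(m ψ₁ ψ₂ 1 * conj (m ψ₁ ψ₂ 2)).im,
        (m ψ₁ ψ₂ 2 * conj (m ψ₁ ψ₂ 0)).im,
        (m ψ₁ ψ₂ 0 * conj (m ψ₁ ψ₂ 1)).im])
    (M : EuclideanSpace ℂ (Fin n) → EuclideanSpace ℂ (Fin n) → Matrix (Fin 3) (Fin 3) ℂ)
    (hMdef : ∀ ψ₁ ψ₂, M ψ₁ ψ₂ = Matrix.of fun i =>
      ![m ψ₁ ψ₂ i, conj (m ψ₁ ψ₂ i), ⟪ψ₂, Hc i ψ₂⟫_ℂ - ⟪ψ₁, Hc i ψ₁⟫_ℂ])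
    (γ : ℝ → (Fin 3 → ℝ))
    (φj φj1 φj' φj1' : ℝ → EuclideanSpace ℂ (Fin n))
    (lamj lamj1 lamj' lamj1' : ℝ → ℝ)
    (hγ : ∀ t, HasDerivAt γ (Xf (φj t) (φj1 t)) t)
    (hφj : ∀ t, HasDerivAt φj (φj' t) t) (hφj1 : ∀ t, HasDerivAt φj1 (φj1' t) t)
    (hlamj : ∀ t, HasDerivAt lamj (lamj' t) t) (hlamj1 : ∀ t, HasDerivAt lamj1 (lamj1' t) t)
    (heigj : ∀ t, (H₀ + ∑ i, (γ t i : ℂ) • Hc i) (φj t) = (lamj t : ℂ) • φj t)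
    (heigj1 : ∀ t, (H₀ + ∑ i, (γ t i : ℂ) • Hc i) (φj1 t) = (lamj1 t : ℂ) • φj1 t)
    (hnormj : ∀ t, ⟪φj t, φj t⟫_ℂ = 1) (hnormj1 : ∀ t, ⟪φj1 t, φj1 t⟫_ℂ = 1) :
    ∀ t, ((lamj1' t - lamj' t : ℝ) : ℂ) = (1 / (2 * I)) * (M (φj t) (φj1 t)).det := by
  intro t
  have hA : HasDerivAt (fun s => H₀ + ∑ i, (γ s i : ℂ) • Hc i)
      (∑ i, (Xf (φj t) (φj1 t) i : ℂ) • Hc i) t :=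
    hasDerivAt_add_sum_ofReal_smul H₀ Hc (hγ t)
  have hsa := isSelfAdjoint_add_sum_ofReal_smul (𝕜 := ℂ)
    (A := EuclideanSpace ℂ (Fin n) →L[ℂ] EuclideanSpace ℂ (Fin n)) hH₀ hHc (γ t)
  have hj : (lamj' t : ℂ) = _ :=
    eigenvalue_deriv_eq_inner hA (hφj t) (hlamj t) hsa.isSymmetric heigj hnormj
  have hj1 : (lamj1' t : ℂ) = _ :=
    eigenvalue_deriv_eq_inner hA (hφj1 t) (hlamj1 t) hsa.isSymmetric heigj1 hnormj1
  have hX : Xf (φj t) (φj1 t) = nonmixingField (m (φj t) (φj1 t)) := hXf _ _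
  rw [hMdef, det_conicity, ← hX, one_div, inv_mul_cancel_left₀ (by simp), ofReal_sub, hj1, hj]
  simp only [sum_apply, smul_apply, inner_sum, inner_smul_right, mul_sub, Finset.sum_sub_distrib]

/-- eigenvalue gap growth along the non-mixing field: if the control curve
`γ` solves `γ' = X(φ_j, φ_{j+1})`, then
`d/dt [λ_{j+1}(γ(t)) − λ_j(γ(t))] = (1/(2i)) det M(φ_j(γ(t)), φ_{j+1}(γ(t)))`. -/
theorem gap_derivative_along_nonmixing_field
    {n : ℕ}
    (H₀ : EuclideanSpace ℂ (Fin n) →L[ℂ] EuclideanSpace ℂ (Fin n))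
    (Hc : Fin 3 → (EuclideanSpace ℂ (Fin n) →L[ℂ] EuclideanSpace ℂ (Fin n)))
    (hH₀ : IsSelfAdjoint H₀) (hHc : ∀ i, IsSelfAdjoint (Hc i))
    (m : EuclideanSpace ℂ (Fin n) → EuclideanSpace ℂ (Fin n) → Fin 3 → ℂ)
    (hm : ∀ ψ₁ ψ₂, m ψ₁ ψ₂ = fun i => ⟪ψ₁, Hc i ψ₂⟫_ℂ)
    (Xf : EuclideanSpace ℂ (Fin n) → EuclideanSpace ℂ (Fin n) → Fin 3 → ℝ)
    (hXf : ∀ ψ₁ ψ₂, Xf ψ₁ ψ₂ =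
      ![(m ψ₁ ψ₂ 1 * conj (m ψ₁ ψ₂ 2)).im,
        (m ψ₁ ψ₂ 2 * conj (m ψ₁ ψ₂ 0)).im,
        (m ψ₁ ψ₂ 0 * conj (m ψ₁ ψ₂ 1)).im])
    (M : EuclideanSpace ℂ (Fin n) → EuclideanSpace ℂ (Fin n) → Matrix (Fin 3) (Fin 3) ℂ)
    (hMdef : ∀ ψ₁ ψ₂, M ψ₁ ψ₂ = Matrix.of fun i =>
      ![m ψ₁ ψ₂ i, conj (m ψ₁ ψ₂ i), ⟪ψ₂, Hc i ψ₂⟫_ℂ - ⟪ψ₁, Hc i ψ₁⟫_ℂ])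
    (γ : ℝ → (Fin 3 → ℝ))
    (φj φj1 φj' φj1' : ℝ → EuclideanSpace ℂ (Fin n))
    (lamj lamj1 lamj' lamj1' : ℝ → ℝ)
    (hγ : ∀ t, HasDerivAt γ (Xf (φj t) (φj1 t)) t)
    (hφj : ∀ t, HasDerivAt φj (φj' t) t) (hφj1 : ∀ t, HasDerivAt φj1 (φj1' t) t)
    (hlamj : ∀ t, HasDerivAt lamj (lamj' t) t) (hlamj1 : ∀ t, HasDerivAt lamj1 (lamj1' t) t)
    (heigj : ∀ t, (H₀ + ∑ i, (γ t i : ℂ) • Hc i) (φj t) = (lamj t : ℂ) • φj t)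
    (heigj1 : ∀ t, (H₀ + ∑ i, (γ t i : ℂ) • Hc i) (φj1 t) = (lamj1 t : ℂ) • φj1 t)
    (hnormj : ∀ t, ⟪φj t, φj t⟫_ℂ = 1) (hnormj1 : ∀ t, ⟪φj1 t, φj1 t⟫_ℂ = 1)
    (horth : ∀ t, ⟪φj t, φj1 t⟫_ℂ = 0)
    (hgap : ∀ t, lamj t < lamj1 t) :
    ∀ t, ((lamj1' t - lamj' t : ℝ) : ℂ) = (1 / (2 * I)) * (M (φj t) (φj1 t)).det :=
  gap_derivative_along_nonmixing_field_general H₀ Hc hH₀ hHc m Xf hXf M hMdef γ φj φj1 φj' φj1' lamj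
    lamj1 lamj' lamj1' hγ hφj hφj1 hlamj hlamj1 heigj heigj1 hnormj hnormj1
end
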